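/- arXiv:0911.0109 — 2 statements merged into one kernel-verified Lean document; each statement's English description precedes it below -/
import Mathlib

section
/- For 0 < q < 1, for all n ≥ 0 and all real x with (1-q)x² ≤ 4 (i.e. x ∈ S(q) = [-2/√(1-q), 2/√(1-q)]): |H_n(x|q)| ≤ W_n(q)·(1-q)^{-n/2}, where W_n(q) = Σ_{i=0}^{n} [n choose i]_q. -/
open Finset

noncomputable section

/-- q-number [n]_q = 1 + q + ... + q^{n-1} -/
def qNum (q : ℝ) (n : ℕ) : ℝ := ∑ i ∈ Finset.range n, q ^ i

/-- q-factorial [n]_q! -/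
def qFact (q : ℝ) (n : ℕ) : ℝ := ∏ i ∈ Finset.range n, qNum q (i + 1)

/-- Gaussian binomial coefficient -/
def qBinom (q : ℝ) (n k : ℕ) : ℝ :=
  if k ≤ n then qFact q n / (qFact q (n - k) * qFact q k) else 0

/-- q-Hermite polynomials H_n(x|q) -/
def qHermite (q x : ℝ) : ℕ → ℝ
  | 0 => 1
  | 1 => x
  | n + 2 => x * qHermite q x (n + 1) - qNum q (n + 1) * qHermite q x n

/-- Chebyshev polynomials of the second kind -/
def chebU (x : ℝ) : ℕ → ℝ
  | 0 => 1
  | 1 => 2 * x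
  | n + 2 => 2 * x * chebU x (n + 1) - chebU x n

/-- probabilistic Hermite polynomials He_n -/
def hermiteHe (x : ℝ) : ℕ → ℝ
  | 0 => 1
  | 1 => x
  | n + 2 => x * hermiteHe x (n + 1) - (n + 1 : ℝ) * hermiteHe x n

/-- Al-Salam–Chihara polynomials P_n(x|y,ρ,q) -/
def ascP (q y ρ x : ℝ) : ℕ → ℝ
  | 0 => 1
  | 1 => x - ρ * y
  | n + 2 => (x - ρ * y * q ^ (n + 1)) * ascP q y ρ x (n + 1)
      - (1 - ρ ^ 2 * q ^ n) * qNum q (n + 1) * ascP q y ρ x n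

/-!
Write `√(1 - q) x = z + z⁻¹` with `|z| = 1`, which is possible exactly when `(1 - q) x² ≤ 4`.
By the two `q`-Pascal rules the Rogers–Szegő polynomials `hₙ(w) = ∑ₖ [n, k]_q wᵏ` satisfy
`hₙ₊₂(w) = (1 + w) hₙ₊₁(w) - (1 - qⁿ⁺¹) w hₙ(w)`, and with `w = z²` this is the recurrence of
`√(1 - q)ⁿ Hₙ(x|q) zⁿ`; hence the two agree (Rogers' formula), and the triangle inequality on
`hₙ(z²)` gives `√(1 - q)ⁿ |Hₙ(x|q)| ≤ ∑ₖ [n, k]_q`.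
-/

section QNumbers

variable {q : ℝ}

lemma qNum_succ_pos (hq : 0 < q) (n : ℕ) : 0 < qNum q (n + 1) :=
  sum_pos (fun i _ => pow_pos hq i) (nonempty_range_iff.2 n.succ_ne_zero)

lemma qNum_add (q : ℝ) (a b : ℕ) : qNum q (a + b) = qNum q a + q ^ a * qNum q b := by
  simp only [qNum, sum_range_add, mul_sum, pow_add]

lemma qNum_mul_one_sub (q : ℝ) (n : ℕ) : qNum q n * (1 - q) = 1 - q ^ n :=
  geom_sum_mul_neg q n

lemma qFact_succ (q : ℝ) (n : ℕ) : qFact q (n + 1) = qFact q n * qNum q (n + 1) :=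
  prod_range_succ _ _

lemma qFact_pos (hq : 0 < q) (n : ℕ) : 0 < qFact q n :=
  prod_pos fun i _ => qNum_succ_pos hq i

lemma qBinom_of_lt {n k : ℕ} (h : n < k) : qBinom q n k = 0 :=
  if_neg (Nat.not_le.2 h)

lemma qBinom_zero_right (hq : 0 < q) (n : ℕ) : qBinom q n 0 = 1 := by
  rw [qBinom, if_pos n.zero_le, Nat.sub_zero, show qFact q 0 = 1 from prod_range_zero _,
    mul_one, div_self (qFact_pos hq n).ne']

lemma qBinom_nonneg (hq : 0 < q) (n k : ℕ) : 0 ≤ qBinom q n k := by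
  unfold qBinom
  split_ifs
  · exact div_nonneg (qFact_pos hq n).le (mul_pos (qFact_pos hq _) (qFact_pos hq _)).le
  · exact le_rfl

/-- `[n+1, k+1]`, `[n, k]` and `[n, k+1]` are `[n]! / ([n-k]! [k+1]!)` times `[n+1]`, `[k+1]`
and `[n-k]` respectively, so each way of splitting `[n+1]` into `[k+1]` and `[n-k]` gives a
Pascal rule. -/
lemma qBinom_succ_succ_of_qNum_eq (hq : 0 < q) {n k : ℕ} (hk : k ≤ n) {a b : ℝ}
    (h : qNum q (n + 1) = a * qNum q (k + 1) + b * qNum q (n - k)) :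
    qBinom q (n + 1) (k + 1) = a * qBinom q n k + b * qBinom q n (k + 1) := by
  set c := qFact q n / (qFact q (n - k) * qFact q (k + 1))
  have hnum := fun m => (qNum_succ_pos hq m).ne'
  have h₁ : qBinom q (n + 1) (k + 1) = c * qNum q (n + 1) := by
    rw [qBinom, if_pos (by omega), Nat.add_sub_add_right, qFact_succ]
    ring
  have h₂ : qBinom q n k = c * qNum q (k + 1) := by
    rw [qBinom, if_pos hk]
    simp only [c, qFact_succ]
    field_simp [hnum k]
  have h₃ : qBinom q n (k + 1) = c * qNum q (n - k) := by
    rcases hk.eq_or_lt with rfl | hlt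
    · simp [qBinom_of_lt, qNum]
    obtain ⟨d, rfl⟩ : ∃ d, n = k + 1 + d := ⟨n - (k + 1), by omega⟩
    rw [qBinom, if_pos (by omega), show k + 1 + d - (k + 1) = d by omega]
    simp only [c, show k + 1 + d - k = d + 1 by omega, qFact_succ]
    field_simp [hnum d]
  rw [h₁, h₂, h₃, h]
  ring

lemma qBinom_succ_succ (hq : 0 < q) (n k : ℕ) :
    qBinom q (n + 1) (k + 1) = qBinom q n k + q ^ (k + 1) * qBinom q n (k + 1) := by
  rcases le_or_gt k n with hk | hk
  · simpa only [one_mul] using qBinom_succ_succ_of_qNum_eq hq hk (a := 1) (b := q ^ (k + 1))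
      (by rw [one_mul, ← qNum_add, show k + 1 + (n - k) = n + 1 by omega])
  · simp [qBinom_of_lt, hk, show n < k + 1 by omega]

lemma qBinom_succ_succ' (hq : 0 < q) (n k : ℕ) :
    qBinom q (n + 1) (k + 1) = q ^ (n - k) * qBinom q n k + qBinom q n (k + 1) := by
  rcases le_or_gt k n with hk | hk
  · simpa only [one_mul] using qBinom_succ_succ_of_qNum_eq hq hk (a := q ^ (n - k)) (b := 1)
      (by rw [one_mul, add_comm (q ^ (n - k) * _), ← qNum_add,
        show n - k + (k + 1) = n + 1 by omega])
  · simp [qBinom_of_lt, hk, show n < k + 1 by omega]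

end QNumbers

section RogersSzego

variable {A : Type*} [CommRing A] [Algebra ℝ A] {q : ℝ}

def rogersSzego (q : ℝ) (w : A) (n : ℕ) : A := ∑ k ∈ range (n + 1), qBinom q n k • w ^ k

lemma rogersSzego_zero (hq : 0 < q) (w : A) : rogersSzego q w 0 = 1 := by
  simp [rogersSzego, qBinom_zero_right hq]

lemma rogersSzego_eq_sum_shift_add_one (hq : 0 < q) (w : A) (n : ℕ) :
    rogersSzego q w n = ∑ k ∈ range (n + 1), qBinom q n (k + 1) • w ^ (k + 1) + 1 := by
  rw [sum_range_succ, qBinom_of_lt (Nat.lt_succ_self n), zero_smul, add_zero, rogersSzego,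
    sum_range_succ', qBinom_zero_right hq, one_smul, pow_zero]

lemma rogersSzego_succ_eq_sum_shift_add_one (hq : 0 < q) (w : A) (n : ℕ) :
    rogersSzego q w (n + 1) = ∑ k ∈ range (n + 1), qBinom q (n + 1) (k + 1) • w ^ (k + 1) + 1 := by
  rw [rogersSzego, sum_range_succ', qBinom_zero_right hq, one_smul, pow_zero]

lemma rogersSzego_succ (hq : 0 < q) (w : A) (n : ℕ) :
    rogersSzego q w (n + 1) = w * rogersSzego q w n + rogersSzego q (q • w) n := by
  rw [rogersSzego_succ_eq_sum_shift_add_one hq, rogersSzego_eq_sum_shift_add_one hq (q • w),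
    rogersSzego, mul_sum, ← add_assoc, ← sum_add_distrib]
  congr 1
  refine sum_congr rfl fun k _ => ?_
  rw [qBinom_succ_succ hq, smul_pow, add_smul, mul_smul, mul_smul_comm, ← pow_succ',
    smul_comm (q ^ (k + 1))]

lemma rogersSzego_one (hq : 0 < q) (w : A) : rogersSzego q w 1 = 1 + w := by
  rw [rogersSzego_succ hq, rogersSzego_zero hq, rogersSzego_zero hq, mul_one, add_comm]

lemma rogersSzego_succ_smul (hq : 0 < q) (w : A) (n : ℕ) :
    rogersSzego q (q • w) (n + 1) =
      q ^ (n + 1) • w * rogersSzego q w n + rogersSzego q (q • w) n := by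
  rw [rogersSzego_succ_eq_sum_shift_add_one hq, rogersSzego_eq_sum_shift_add_one hq (q • w),
    rogersSzego, mul_sum, ← add_assoc, ← sum_add_distrib]
  congr 1
  refine sum_congr rfl fun k hk => ?_
  have hk : k ≤ n := Nat.lt_succ_iff.1 (mem_range.1 hk)
  rw [qBinom_succ_succ' hq, smul_pow, add_smul, mul_smul, smul_mul_assoc, mul_smul_comm,
    ← pow_succ', smul_smul, smul_smul, mul_right_comm, ← pow_add,
    show n - k + (k + 1) = n + 1 by omega, ← smul_smul]

lemma rogersSzego_add_two (hq : 0 < q) (w : A) (n : ℕ) :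
    rogersSzego q w (n + 2) =
      (1 + w) * rogersSzego q w (n + 1) - (1 - q ^ (n + 1)) • w * rogersSzego q w n := by
  have h₀ := rogersSzego_succ hq w n
  rw [rogersSzego_succ hq, rogersSzego_succ_smul hq, sub_smul, one_smul]
  linear_combination -h₀

theorem qHermite_smul_pow_eq_rogersSzego (hq : 0 < q) {s x : ℝ} (hs : s ^ 2 = 1 - q) {z w : A}
    (hzw : z * w = 1) (hsum : z + w = algebraMap ℝ A (s * x)) (n : ℕ) :
    (s ^ n * qHermite q x n) • z ^ n = rogersSzego q (z ^ 2) n := by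
  induction n using Nat.twoStepInduction with
  | zero => simp [qHermite, rogersSzego_zero hq]
  | one =>
    rw [rogersSzego_one hq, pow_one, pow_one, qHermite, Algebra.smul_def, ← hsum]
    linear_combination hzw
  | more n ih₀ ih₁ =>
    have hnum : algebraMap ℝ A (qNum q (n + 1)) * algebraMap ℝ A s ^ 2
        = 1 - algebraMap ℝ A q ^ (n + 1) := by
      rw [← map_pow, hs, ← map_mul, qNum_mul_one_sub, map_sub, map_one, map_pow]
    rw [rogersSzego_add_two hq, ← ih₀, ← ih₁, qHermite]
    simp only [Algebra.smul_def, map_mul, map_sub, map_pow, map_one] at hsum ⊢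
    linear_combination -(z * algebraMap ℝ A s ^ (n + 1) * algebraMap ℝ A (qHermite q x (n + 1))
      * z ^ (n + 1)) * hsum
      + (algebraMap ℝ A s ^ (n + 1) * algebraMap ℝ A (qHermite q x (n + 1)) * z ^ (n + 1)) * hzw
      - (z ^ 2 * algebraMap ℝ A s ^ n * algebraMap ℝ A (qHermite q x n) * z ^ n) * hnum

end RogersSzego

lemma norm_rogersSzego_le {A : Type*} [NormedCommRing A] [NormedAlgebra ℝ A] [NormOneClass A]
    {q : ℝ} (hq : 0 < q) {w : A} (hw : ‖w‖ ≤ 1) (n : ℕ) :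
    ‖rogersSzego q w n‖ ≤ ∑ k ∈ range (n + 1), qBinom q n k := by
  refine (norm_sum_le _ _).trans (sum_le_sum fun k _ => ?_)
  rw [norm_smul, Real.norm_of_nonneg (qBinom_nonneg hq n k)]
  exact mul_le_of_le_one_right (qBinom_nonneg hq n k)
    ((norm_pow_le w k).trans (pow_le_one₀ (norm_nonneg w) hw))

lemma Complex.exists_norm_eq_one_add_inv_eq {a : ℝ} (ha : a ^ 2 ≤ 4) :
    ∃ z : ℂ, ‖z‖ = 1 ∧ z + z⁻¹ = a := by
  refine ⟨exp (Real.arccos (a / 2) * I), norm_exp_ofReal_mul_I _, ?_⟩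
  rw [← exp_neg, ← neg_mul, ← two_cos, ← ofReal_cos, Real.cos_arccos (by nlinarith) (by nlinarith)]
  push_cast
  ring

lemma Real.rpow_neg_natCast_div_two {t : ℝ} (ht : 0 ≤ t) (n : ℕ) :
    t ^ (-(n : ℝ) / 2) = (√t ^ n)⁻¹ := by
  rw [neg_div, Real.rpow_neg ht, Real.sqrt_eq_rpow, ← Real.rpow_natCast, ← Real.rpow_mul ht]
  ring_nf

theorem qHermite_bound (q : ℝ) (hq0 : 0 < q) (hq1 : q < 1) (n : ℕ) (x : ℝ)
    (hx : (1 - q) * x ^ 2 ≤ 4) :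
    |qHermite q x n| ≤ (∑ i ∈ Finset.range (n + 1), qBinom q n i) * (1 - q) ^ (-(n : ℝ) / 2) := by
  have h1q : 0 < 1 - q := sub_pos.2 hq1
  have hs_pos : 0 < √(1 - q) := Real.sqrt_pos.2 h1q
  have hs : √(1 - q) ^ 2 = 1 - q := Real.sq_sqrt h1q.le
  obtain ⟨z, hz, hzx⟩ := Complex.exists_norm_eq_one_add_inv_eq (a := √(1 - q) * x)
    (by rwa [mul_pow, hs])
  have hz0 : z ≠ 0 := norm_ne_zero_iff.1 (hz ▸ one_ne_zero)
  have hrogers := qHermite_smul_pow_eq_rogersSzego hq0 hs (mul_inv_cancel₀ hz0) hzx n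
  have hbound := norm_rogersSzego_le hq0 (w := z ^ 2) (by rw [norm_pow, hz, one_pow]) n
  rw [← hrogers, norm_smul, norm_pow, hz, one_pow, mul_one, Real.norm_eq_abs, abs_mul, abs_pow,
    abs_of_pos hs_pos] at hbound
  rw [Real.rpow_neg_natCast_div_two h1q.le, ← div_eq_mul_inv, le_div_iff₀ (pow_pos hs_pos n)]
  linarith
end
end

section
/- For real x, y, ρ, q, k with |q| < 1, 0 < 1-q, (1-q)x² ≤ 4 and (1-q)y² ≤ 4 and |ρ| < 1: (1-ρ²q^{2k})² - (1-q)ρq^k(1+ρ²q^{2k})xy + (1-q)ρ²(x²+y²)q^{2k} ≤ (1 + ρ²q^{2k} + √(1-q)·|ρy|·|q|^k)². -/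
open Finset

noncomputable section

/-! With `b = ρ qᵏ`, `u = √(1-q) x` and `v = √(1-q) b y`, the claim reads
`(1-b²)² - (1+b²) u v + b² u² + v² ≤ (1 + b² + |v|)²` with `|u| ≤ 2`. Since
`(1+b²)² - (1-b²)² = 4b²`, it splits into `b² u² ≤ 4b²` and `-(1+b²) u v ≤ 2 (1+b²) |v|`. -/

theorem sq_sub_mul_add_le_sq_of_abs_le_two {u : ℝ} (hu : |u| ≤ 2) (b v : ℝ) :
    (1 - b ^ 2) ^ 2 - (1 + b ^ 2) * u * v + b ^ 2 * u ^ 2 + v ^ 2 ≤ (1 + b ^ 2 + |v|) ^ 2 := by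
  have hu2 : u ^ 2 ≤ 4 := by nlinarith [sq_abs u, abs_nonneg u]
  have huv : -(u * v) ≤ 2 * |v| := by
    calc -(u * v) ≤ |u| * |v| := by rw [← abs_mul]; exact neg_le_abs _
      _ ≤ 2 * |v| := by gcongr
  nlinarith [mul_le_mul_of_nonneg_left hu2 (sq_nonneg b),
    mul_le_mul_of_nonneg_left huv (by positivity : (0 : ℝ) ≤ 1 + b ^ 2), sq_abs v]

theorem abs_sqrt_mul_le_two {c x : ℝ} (hc : 0 ≤ c) (hx : c * x ^ 2 ≤ 4) : |√c * x| ≤ 2 := by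
  refine abs_le_of_sq_le_sq ?_ zero_le_two
  rw [mul_pow, Real.sq_sqrt hc]
  linarith

theorem quadratic_bound_general (x y ρ q : ℝ) (k : ℕ) (hq1 : 0 < 1 - q)
    (hx : (1 - q) * x ^ 2 ≤ 4) :
    (1 - ρ ^ 2 * q ^ (2 * k)) ^ 2 - (1 - q) * ρ * q ^ k * (1 + ρ ^ 2 * q ^ (2 * k)) * x * y +
        (1 - q) * ρ ^ 2 * (x ^ 2 + y ^ 2) * q ^ (2 * k) ≤
      (1 + ρ ^ 2 * q ^ (2 * k) + Real.sqrt (1 - q) * |ρ * y| * |q| ^ k) ^ 2 := by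
  have hs : √(1 - q) ^ 2 = 1 - q := Real.sq_sqrt hq1.le
  have key := sq_sub_mul_add_le_sq_of_abs_le_two (abs_sqrt_mul_le_two hq1.le hx)
    (ρ * q ^ k) (√(1 - q) * (ρ * q ^ k) * y)
  convert key using 1
  · linear_combination (ρ * q ^ k * (1 + ρ ^ 2 * q ^ (2 * k)) * x * y
      - ρ ^ 2 * (x ^ 2 + y ^ 2) * q ^ (2 * k)) * hs
  · simp only [abs_mul, abs_pow, abs_of_nonneg (Real.sqrt_nonneg _)]
    ring

theorem quadratic_bound (x y ρ q : ℝ) (k : ℕ) (hq : |q| < 1) (hq1 : 0 < 1 - q)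
    (hx : (1 - q) * x ^ 2 ≤ 4) (hy : (1 - q) * y ^ 2 ≤ 4) (hρ : |ρ| < 1) :
    (1 - ρ ^ 2 * q ^ (2 * k)) ^ 2 - (1 - q) * ρ * q ^ k * (1 + ρ ^ 2 * q ^ (2 * k)) * x * y +
        (1 - q) * ρ ^ 2 * (x ^ 2 + y ^ 2) * q ^ (2 * k) ≤
      (1 + ρ ^ 2 * q ^ (2 * k) + Real.sqrt (1 - q) * |ρ * y| * |q| ^ k) ^ 2 :=
  quadratic_bound_general x y ρ q k hq1 hx
end
end
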